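/- Let n ≥ 1, let X be a 2n×2n real matrix and Y a symmetric 2n×2n real matrix. Then the following are equivalent: (i) for every S ∈ Sp(2n,ℝ), the matrix (1/2)·X·S·Sᵀ·Xᵀ + Y − (i/2)Ω_n is PSD; (ii) for every real symmetric 2n×2n matrix σ such that σ − (i/2)Ω_n is PSD, the matrix X·σ·Xᵀ + Y − (i/2)Ω_n is PSD. -/

import Mathlib

open Matrix ComplexOrder

/-- The `2n × 2n` symplectic form matrix `Ω_n`, block diagonal with `n` copies
of `[[0,1],[-1,0]]`. -/
def Omega (n : ℕ) : Matrix (Fin (2*n)) (Fin (2*n)) ℝ :=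
  Matrix.of fun i j =>
    if (i : ℕ) + 1 = (j : ℕ) ∧ (i : ℕ) % 2 = 0 then 1
    else if (j : ℕ) + 1 = (i : ℕ) ∧ (j : ℕ) % 2 = 0 then -1 else 0

/-- Entrywise coercion of a real matrix to a complex matrix. -/
def cC {m : Type*} (M : Matrix m m ℝ) : Matrix m m ℂ := M.map (fun x => (x : ℂ))

namespace PfAux

variable {n : ℕ}

/-- the index pairing: flips within each 2-block -/
def pf (i : Fin (2*n)) : Fin (2*n) :=
  ⟨if (i : ℕ) % 2 = 0 then (i : ℕ) + 1 else (i : ℕ) - 1, by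
    rcases i with ⟨v, hv⟩; dsimp only; split <;> omega⟩

def sgn (i : Fin (2*n)) : ℝ := if (i : ℕ) % 2 = 0 then 1 else -1

lemma pf_pf (i : Fin (2*n)) : pf (pf i) = i := by
  rcases i with ⟨v, hv⟩
  simp only [pf, Fin.mk.injEq]
  split <;> split <;> omega

lemma sgn_pf (i : Fin (2*n)) : sgn (pf i) = - sgn i := by
  rcases i with ⟨v, hv⟩
  simp only [pf, sgn]
  split <;> split <;> first | (exfalso; omega) | norm_num

lemma sgn_mul_self (i : Fin (2*n)) : sgn i * sgn i = 1 := by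
  unfold sgn; split <;> norm_num

lemma Omega_apply (i j : Fin (2*n)) :
    Omega n i j = if j = pf i then sgn i else 0 := by
  rcases i with ⟨v, hv⟩; rcases j with ⟨w, hw⟩
  simp only [Omega, of_apply, pf, sgn, Fin.mk.injEq]
  split_ifs <;> first | rfl | omega

lemma Omega_mul_apply (M : Matrix (Fin (2*n)) (Fin (2*n)) ℝ) (i j) :
    (Omega n * M) i j = sgn i * M (pf i) j := by
  rw [mul_apply]
  rw [Finset.sum_eq_single (pf i)]
  · rw [Omega_apply, if_pos rfl]
  · intro k _ hk; rw [Omega_apply, if_neg hk, zero_mul]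
  · intro h; exact absurd (Finset.mem_univ _) h

lemma Omega_mul_Omega : Omega n * Omega n = -1 := by
  ext i j
  rw [Omega_mul_apply, Omega_apply, pf_pf, sgn_pf]
  by_cases h : j = i
  · subst h; simp [sgn_mul_self]
  · simp [h, Ne.symm h]

lemma Omega_transpose : (Omega n)ᵀ = - Omega n := by
  ext i j
  rw [transpose_apply, neg_apply, Omega_apply, Omega_apply]
  by_cases h : i = pf j
  · have h' : j = pf i := by rw [h, pf_pf]
    rw [if_pos h, if_pos h', h, sgn_pf, neg_neg]
  · have h' : j ≠ pf i := by
      intro hj; exact h (by rw [hj, pf_pf])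
    rw [if_neg h, if_neg h', neg_zero]

lemma Omega_mul_transpose : Omega n * (Omega n)ᵀ = 1 := by
  rw [Omega_transpose, Matrix.mul_neg, Omega_mul_Omega, neg_neg]

end PfAux


set_option linter.unusedSectionVars false

variable {N : Type*} [Fintype N] [DecidableEq N]

lemma vmv_mulVec (a b x : N → ℝ) : vecMulVec a b *ᵥ x = (b ⬝ᵥ x) • a := by
  funext i
  simp only [vecMulVec_apply, mulVec, dotProduct, Pi.smul_apply, smul_eq_mul, Finset.sum_mul]
  exact Finset.sum_congr rfl fun k _ => by ring

lemma mul_vmv (M : Matrix N N ℝ) (a b : N → ℝ) :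
    M * vecMulVec a b = vecMulVec (M *ᵥ a) b := by
  ext i j
  simp only [vecMulVec_apply, mul_apply, mulVec, dotProduct, Finset.sum_mul]
  exact Finset.sum_congr rfl fun k _ => by ring

lemma vmv_mul (a b : N → ℝ) (M : Matrix N N ℝ) :
    vecMulVec a b * M = vecMulVec a (b ᵥ* M) := by
  ext i j
  simp only [vecMulVec_apply, mul_apply, vecMul, dotProduct, Finset.mul_sum]
  exact Finset.sum_congr rfl fun k _ => by ring

lemma vmv_mul_vmv (a b c d : N → ℝ) :
    vecMulVec a b * vecMulVec c d = (b ⬝ᵥ c) • vecMulVec a d := by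
  ext i j
  simp only [vecMulVec_apply, mul_apply, dotProduct, Matrix.smul_apply, smul_eq_mul, Finset.sum_mul]
  exact Finset.sum_congr rfl fun k _ => by ring

lemma vmv_transpose (a b : N → ℝ) : (vecMulVec a b)ᵀ = vecMulVec b a := by
  ext i j; simp [vecMulVec_apply, mul_comm]

section W3
open PfAux
variable {n : ℕ}

lemma vmv_neg_left (a b : Fin (2*n) → ℝ) : vecMulVec (-a) b = - vecMulVec a b := by
  ext i j; simp [vecMulVec_apply]

lemma vmv_neg_right (a b : Fin (2*n) → ℝ) : vecMulVec a (-b) = - vecMulVec a b := by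
  ext i j; simp [vecMulVec_apply]

lemma vecMul_Omega (x : Fin (2*n) → ℝ) : x ᵥ* Omega n = -(Omega n *ᵥ x) := by
  rw [show x ᵥ* Omega n = x ᵥ* (-(Omega n))ᵀ from by
    rw [transpose_neg, Omega_transpose, neg_neg], vecMul_transpose, neg_mulVec]

lemma skew_dot (x : Fin (2*n) → ℝ) : x ⬝ᵥ (Omega n *ᵥ x) = 0 := by
  have h := dotProduct_mulVec x (Omega n) x
  rw [vecMul_Omega, neg_dotProduct, dotProduct_comm (Omega n *ᵥ x) x] at h
  linarith

lemma Omega_dot (x y : Fin (2*n) → ℝ) :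
    (Omega n *ᵥ x) ⬝ᵥ y = -(x ⬝ᵥ (Omega n *ᵥ y)) := by
  rw [dotProduct_mulVec x (Omega n) y, vecMul_Omega, neg_dotProduct, neg_neg]

lemma Omega_mulVec_Omega (x : Fin (2*n) → ℝ) :
    Omega n *ᵥ (Omega n *ᵥ x) = -x := by
  rw [mulVec_mulVec, Omega_mul_Omega, neg_mulVec, one_mulVec]

/-- symplectic -/
def Symp (T : Matrix (Fin (2*n)) (Fin (2*n)) ℝ) : Prop :=
  T * Omega n * Tᵀ = Omega n

lemma symp_one : Symp (1 : Matrix (Fin (2*n)) (Fin (2*n)) ℝ) := by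
  simp [Symp]

lemma symp_mul {S T : Matrix (Fin (2*n)) (Fin (2*n)) ℝ} (hS : Symp S) (hT : Symp T) :
    Symp (S * T) := by
  unfold Symp at *
  rw [transpose_mul, show S * T * Omega n * (Tᵀ * Sᵀ) = S * (T * Omega n * Tᵀ) * Sᵀ by
    noncomm_ring, hT, hS]

/-- transvection -/
def Tv (u : Fin (2*n) → ℝ) (t : ℝ) : Matrix (Fin (2*n)) (Fin (2*n)) ℝ :=
  1 + t • vecMulVec u (Omega n *ᵥ u)

lemma tv_symp (u : Fin (2*n) → ℝ) (t : ℝ) : Symp (Tv u t) := by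
  set w := Omega n *ᵥ u with hw
  have hAΩ : vecMulVec u w * Omega n = vecMulVec u u := by
    rw [vmv_mul, vecMul_Omega, hw, Omega_mulVec_Omega, neg_neg]
  have hΩAT : Omega n * vecMulVec w u = -(vecMulVec u u) := by
    rw [mul_vmv, hw, Omega_mulVec_Omega, vmv_neg_left]
  have hPAT : vecMulVec u u * vecMulVec w u = 0 := by
    rw [vmv_mul_vmv, hw, skew_dot, zero_smul]
  unfold Symp Tv
  simp only [transpose_add, transpose_one, transpose_smul, vmv_transpose, add_mul, mul_add,
    one_mul, mul_one, smul_mul_assoc, mul_smul_comm, ← hw, hAΩ, hΩAT, hPAT, smul_smul, smul_zero,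
    smul_neg]
  module

lemma tv_mulVec (u : Fin (2*n) → ℝ) (t : ℝ) (x : Fin (2*n) → ℝ) :
    Tv u t *ᵥ x = x + (t * ((Omega n *ᵥ u) ⬝ᵥ x)) • u := by
  rw [Tv, add_mulVec, one_mulVec, smul_mulVec, vmv_mulVec, smul_smul]

/-- squeeze -/
def Sq (u : Fin (2*n) → ℝ) (l m : ℝ) : Matrix (Fin (2*n)) (Fin (2*n)) ℝ :=
  1 + (l-1) • vecMulVec u u + (m-1) • vecMulVec (Omega n *ᵥ u) (Omega n *ᵥ u)

lemma sq_mulVec (u : Fin (2*n) → ℝ) (l m : ℝ) (x : Fin (2*n) → ℝ) :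
    Sq u l m *ᵥ x = x + ((l-1) * (u ⬝ᵥ x)) • u
      + ((m-1) * ((Omega n *ᵥ u) ⬝ᵥ x)) • (Omega n *ᵥ u) := by
  rw [Sq, add_mulVec, add_mulVec, one_mulVec, smul_mulVec, smul_mulVec,
    vmv_mulVec, vmv_mulVec, smul_smul, smul_smul]

lemma sq_symp {u : Fin (2*n) → ℝ} {l m : ℝ} (hu : u ⬝ᵥ u = 1) (hlm : l * m = 1) :
    Symp (Sq u l m) := by
  set w := Omega n *ᵥ u with hw
  have hwu : w ⬝ᵥ u = 0 := by rw [hw, dotProduct_comm, skew_dot]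
  have huw : u ⬝ᵥ w = 0 := by rw [hw, skew_dot]
  have hww : w ⬝ᵥ w = 1 := by
    rw [hw, Omega_dot, Omega_mulVec_Omega, dotProduct_neg, hu, neg_neg]
  have hPΩ : vecMulVec u u * Omega n = -(vecMulVec u w) := by
    rw [vmv_mul, vecMul_Omega, ← hw, vmv_neg_right]
  have hQΩ : vecMulVec w w * Omega n = vecMulVec w u := by
    rw [vmv_mul, vecMul_Omega, hw, Omega_mulVec_Omega, neg_neg]
  have hΩP : Omega n * vecMulVec u u = vecMulVec w u := by rw [mul_vmv, ← hw]
  have hΩQ : Omega n * vecMulVec w w = -(vecMulVec u w) := by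
    rw [mul_vmv, hw, Omega_mulVec_Omega, vmv_neg_left]
  have h1 : vecMulVec u w * vecMulVec u u = 0 := by rw [vmv_mul_vmv, hwu, zero_smul]
  have h2 : vecMulVec u w * vecMulVec w w = vecMulVec u w := by
    rw [vmv_mul_vmv, hww, one_smul]
  have h3 : vecMulVec w u * vecMulVec u u = vecMulVec w u := by
    rw [vmv_mul_vmv, hu, one_smul]
  have h4 : vecMulVec w u * vecMulVec w w = 0 := by rw [vmv_mul_vmv, huw, zero_smul]
  unfold Symp Sq
  simp only [transpose_add, transpose_one, transpose_smul, vmv_transpose, add_mul, mul_add,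
    one_mul, mul_one, smul_mul_assoc, mul_smul_comm, ← hw, hPΩ, hQΩ, hΩP, hΩQ, neg_mul,
    mul_neg, h1, h2, h3, h4, smul_smul, smul_zero, smul_neg, neg_zero]
  match_scalars <;>
    first
    | ring1
    | linear_combination hlm
    | linear_combination -hlm
    | linear_combination m * hlm
    | linear_combination l * hlm
    | linear_combination (-m) * hlm
    | linear_combination (-l) * hlm

end W3

section W4
open PfAux
variable {n : ℕ}

lemma dot_self_nonneg (x : Fin (2*n) → ℝ) : 0 ≤ x ⬝ᵥ x :=
  Finset.sum_nonneg fun i _ => mul_self_nonneg _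

lemma dot_self_pos {x : Fin (2*n) → ℝ} (hx : x ≠ 0) : 0 < x ⬝ᵥ x :=
  lt_of_le_of_ne (dot_self_nonneg x) fun h => hx ((dotProduct_self_eq_zero).mp h.symm)

lemma symp_transpose {T : Matrix (Fin (2*n)) (Fin (2*n)) ℝ} (hT : Symp T) : Symp Tᵀ := by
  have hOO : (Omega n)ᵀ * Omega n = 1 := by
    rw [Omega_transpose, neg_mul, Omega_mul_Omega, neg_neg]
  have hTB : T * (Omega n * Tᵀ * (Omega n)ᵀ) = 1 := by
    calc T * (Omega n * Tᵀ * (Omega n)ᵀ) = (T * Omega n * Tᵀ) * (Omega n)ᵀ := by noncomm_ring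
    _ = Omega n * (Omega n)ᵀ := by rw [hT]
    _ = 1 := Omega_mul_transpose
  have hBT : (Omega n * Tᵀ * (Omega n)ᵀ) * T = 1 := mul_eq_one_comm.mp hTB
  have h4 : Tᵀ * (Omega n)ᵀ * T = (Omega n)ᵀ := by
    calc Tᵀ * (Omega n)ᵀ * T = ((Omega n)ᵀ * Omega n) * (Tᵀ * (Omega n)ᵀ * T) := by
          rw [hOO, one_mul]
    _ = (Omega n)ᵀ * ((Omega n * Tᵀ * (Omega n)ᵀ) * T) := by noncomm_ring
    _ = (Omega n)ᵀ := by rw [hBT, mul_one]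
  rw [Omega_transpose, mul_neg, neg_mul, neg_eq_iff_eq_neg, neg_neg] at h4
  unfold Symp
  rw [transpose_transpose, h4]

lemma tv_fix {u x : Fin (2*n) → ℝ} (t : ℝ) (h : (Omega n *ᵥ u) ⬝ᵥ x = 0) :
    Tv u t *ᵥ x = x := by
  rw [tv_mulVec, h, mul_zero, zero_smul, add_zero]

lemma sq_fix {u x : Fin (2*n) → ℝ} (l m : ℝ) (h1 : u ⬝ᵥ x = 0)
    (h2 : (Omega n *ᵥ u) ⬝ᵥ x = 0) : Sq u l m *ᵥ x = x := by
  rw [sq_mulVec, h1, h2, mul_zero, mul_zero, zero_smul, zero_smul, add_zero, add_zero]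

lemma Omega_dot_self {u : Fin (2*n) → ℝ} (hu : u ⬝ᵥ u = 1) :
    (Omega n *ᵥ u) ⬝ᵥ (Omega n *ᵥ u) = 1 := by
  rw [Omega_dot, Omega_mulVec_Omega, dotProduct_neg, hu, neg_neg]

lemma sq_self {u : Fin (2*n) → ℝ} (hu : u ⬝ᵥ u = 1) (l m : ℝ) :
    Sq u l m *ᵥ u = l • u := by
  have h2 : (Omega n *ᵥ u) ⬝ᵥ u = 0 := by rw [dotProduct_comm, skew_dot]
  rw [sq_mulVec, hu, h2, mul_zero, zero_smul, add_zero, mul_one]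
  module

lemma sq_omega {u : Fin (2*n) → ℝ} (hu : u ⬝ᵥ u = 1) (l m : ℝ) :
    Sq u l m *ᵥ (Omega n *ᵥ u) = m • (Omega n *ᵥ u) := by
  rw [sq_mulVec, skew_dot, Omega_dot_self hu, mul_zero, zero_smul, add_zero, mul_one]
  module

lemma shrink (C : ℝ) {ε : ℝ} (hC : 0 ≤ C) (hε : 0 < ε) :
    ∃ l : ℝ, 0 < l ∧ l^2 * C ≤ ε := by
  refine ⟨Real.sqrt (ε/(C+ε)), Real.sqrt_pos.mpr (by positivity), ?_⟩
  rw [Real.sq_sqrt (by positivity)]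
  rw [div_mul_eq_mul_div, div_le_iff₀ (by positivity)]
  nlinarith

end W4

section W5
open PfAux
variable {n : ℕ}

/-- Key lemma: the cost `|Ta|² + |Tb|²` can be pushed down to `2|aᵀΩb|` over symplectic `T`. -/
lemma key_inf (a b : Fin (2*n) → ℝ) {ε : ℝ} (hε : 0 < ε) :
    ∃ T : Matrix (Fin (2*n)) (Fin (2*n)) ℝ, Symp T ∧
      (T *ᵥ a) ⬝ᵥ (T *ᵥ a) + (T *ᵥ b) ⬝ᵥ (T *ᵥ b)
        ≤ 2 * |a ⬝ᵥ (Omega n *ᵥ b)| + ε := by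
  by_cases ha : a = 0
  · subst ha
    simp only [zero_dotProduct, abs_zero, mul_zero, zero_add, mulVec_zero,
      dotProduct_zero]
    by_cases hb : b = 0
    · exact ⟨1, symp_one, by simp [hb, le_of_lt hε]⟩
    · have hbb : 0 < b ⬝ᵥ b := dot_self_pos hb
      set r := Real.sqrt (b ⬝ᵥ b) with hr
      have hr0 : 0 < r := Real.sqrt_pos.mpr hbb
      have hr2 : r^2 = b ⬝ᵥ b := Real.sq_sqrt (le_of_lt hbb)
      obtain ⟨u, hu_def⟩ : ∃ x : Fin (2*n) → ℝ, x = r⁻¹ • b := ⟨_, rfl⟩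
      have hu : u ⬝ᵥ u = 1 := by
        rw [hu_def, smul_dotProduct, dotProduct_smul, smul_eq_mul, smul_eq_mul, ← hr2]
        field_simp
      have hb_u : b = r • u := by
        rw [hu_def, smul_smul, mul_inv_cancel₀ (ne_of_gt hr0), one_smul]
      obtain ⟨l, hl0, hlC⟩ := shrink (b ⬝ᵥ b) (dot_self_nonneg b) hε
      refine ⟨Sq u l l⁻¹, sq_symp hu (mul_inv_cancel₀ (ne_of_gt hl0)), ?_⟩
      rw [hb_u, mulVec_smul, sq_self hu, smul_smul, smul_dotProduct, dotProduct_smul,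
        smul_eq_mul, smul_eq_mul, hu]
      calc (r * l) * ((r * l) * 1) = l^2 * (b ⬝ᵥ b) := by rw [← hr2]; ring
      _ ≤ ε := hlC
  · -- main case : a ≠ 0
    have haa : 0 < a ⬝ᵥ a := dot_self_pos ha
    set r := Real.sqrt (a ⬝ᵥ a) with hr
    have hr0 : 0 < r := Real.sqrt_pos.mpr haa
    have hr2 : r^2 = a ⬝ᵥ a := Real.sq_sqrt (le_of_lt haa)
    obtain ⟨u, hu_def⟩ : ∃ x : Fin (2*n) → ℝ, x = r⁻¹ • a := ⟨_, rfl⟩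
    have hu : u ⬝ᵥ u = 1 := by
      rw [hu_def, smul_dotProduct, dotProduct_smul, smul_eq_mul, smul_eq_mul, ← hr2]
      field_simp
    have ha_u : a = r • u := by
      rw [hu_def, smul_smul, mul_inv_cancel₀ (ne_of_gt hr0), one_smul]
    obtain ⟨w, hw_def⟩ : ∃ x : Fin (2*n) → ℝ, x = Omega n *ᵥ u := ⟨_, rfl⟩
    have hww : w ⬝ᵥ w = 1 := by rw [hw_def]; exact Omega_dot_self hu
    have huw : u ⬝ᵥ w = 0 := by rw [hw_def]; exact skew_dot u
    have hwu : w ⬝ᵥ u = 0 := by rw [dotProduct_comm]; exact huw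
    obtain ⟨β, hβ⟩ : ∃ x : ℝ, x = u ⬝ᵥ b := ⟨_, rfl⟩
    obtain ⟨γ, hγ⟩ : ∃ x : ℝ, x = w ⬝ᵥ b := ⟨_, rfl⟩
    obtain ⟨p, hp_def⟩ : ∃ x : Fin (2*n) → ℝ, x = b - β • u - γ • w := ⟨_, rfl⟩
    have hup : u ⬝ᵥ p = 0 := by
      rw [hp_def, dotProduct_sub, dotProduct_sub, dotProduct_smul, dotProduct_smul,
        hu, huw, smul_eq_mul, smul_eq_mul]
      rw [hβ]; ring
    have hwp : w ⬝ᵥ p = 0 := by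
      rw [hp_def, dotProduct_sub, dotProduct_sub, dotProduct_smul, dotProduct_smul,
        hwu, hww, smul_eq_mul, smul_eq_mul]
      rw [hγ]; ring
    have hpu : p ⬝ᵥ u = 0 := by rw [dotProduct_comm]; exact hup
    have hpw : p ⬝ᵥ w = 0 := by rw [dotProduct_comm]; exact hwp
    have hb_dec : b = β • u + γ • w + p := by rw [hp_def]; module
    -- the symplectic invariant
    have hk : a ⬝ᵥ (Omega n *ᵥ b) = -(r * γ) := by
      have h1 : γ = -(u ⬝ᵥ (Omega n *ᵥ b)) := by rw [hγ, hw_def, Omega_dot]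
      rw [ha_u, smul_dotProduct, smul_eq_mul]
      rw [eq_comm, neg_eq_iff_eq_neg] at h1
      rw [h1]; ring
    have habs : |a ⬝ᵥ (Omega n *ᵥ b)| = r * |γ| := by
      rw [hk, abs_neg, abs_mul, abs_of_pos hr0]
    -- facts for fixing a (= r•u) under squeezes along e ∝ p
    have hΩa : Omega n *ᵥ a = r • w := by rw [ha_u, mulVec_smul, ← hw_def]
    have hΩw : Omega n *ᵥ w = -u := by rw [hw_def, Omega_mulVec_Omega]
    -- dot product expansion helper
    have cost : ∀ (δ φ ψ : ℝ),
        (δ • u + φ • w + ψ • p) ⬝ᵥ (δ • u + φ • w + ψ • p)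
          = δ^2 + φ^2 + ψ^2 * (p ⬝ᵥ p) := by
      intro δ φ ψ
      simp only [dotProduct_add, add_dotProduct, dotProduct_smul, smul_dotProduct,
        smul_eq_mul, hu, hww, huw, hwu, hup, hwp, hpu, hpw]
      ring
    by_cases hγ0 : γ = 0
    · -- invariant is zero; shrink everything
      have hβb : b = β • u + p := by rw [hb_dec, hγ0]; module
      by_cases hp0 : p = 0
      · obtain ⟨l, hl0, hlC⟩ := shrink (r^2 + β^2) (by positivity) hε
        refine ⟨Sq u l l⁻¹, sq_symp hu (mul_inv_cancel₀ (ne_of_gt hl0)), ?_⟩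
        have hTa : Sq u l l⁻¹ *ᵥ a = (r * l) • u := by
          rw [ha_u, mulVec_smul, sq_self hu, smul_smul]
        have hTb : Sq u l l⁻¹ *ᵥ b = (β * l) • u := by
          rw [hβb, hp0, add_zero, mulVec_smul, sq_self hu, smul_smul]
        rw [hTa, hTb, habs, hγ0, abs_zero, mul_zero, mul_zero, zero_add]
        rw [smul_dotProduct, dotProduct_smul, smul_dotProduct, dotProduct_smul,
          smul_eq_mul, smul_eq_mul, smul_eq_mul, smul_eq_mul, hu]
        calc r * l * (r * l * 1) + β * l * (β * l * 1) = l^2 * (r^2 + β^2) := by ring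
        _ ≤ ε := hlC
      · -- p ≠ 0 : shrink u-component and p-component separately
        have hpp : 0 < p ⬝ᵥ p := dot_self_pos hp0
        set s := Real.sqrt (p ⬝ᵥ p) with hs
        have hs0 : 0 < s := Real.sqrt_pos.mpr hpp
        have hs2 : s^2 = p ⬝ᵥ p := Real.sq_sqrt (le_of_lt hpp)
        obtain ⟨e, he_def⟩ : ∃ x : Fin (2*n) → ℝ, x = s⁻¹ • p := ⟨_, rfl⟩
        have he : e ⬝ᵥ e = 1 := by
          rw [he_def, smul_dotProduct, dotProduct_smul, smul_eq_mul, smul_eq_mul, ← hs2]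
          field_simp
        have hp_e : p = s • e := by
          rw [he_def, smul_smul, mul_inv_cancel₀ (ne_of_gt hs0), one_smul]
        have heu : e ⬝ᵥ u = 0 := by
          rw [he_def, smul_dotProduct, hpu, smul_zero]
        have hΩe_u : (Omega n *ᵥ e) ⬝ᵥ u = 0 := by
          rw [Omega_dot, ← hw_def, he_def, smul_dotProduct, hpw, smul_zero, neg_zero]
        have heb : e ⬝ᵥ w = 0 := by rw [he_def, smul_dotProduct, hpw, smul_zero]
        obtain ⟨μ, hμ0, hμC⟩ := shrink (p ⬝ᵥ p) (dot_self_nonneg p) (half_pos hε)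
        obtain ⟨l, hl0, hlC⟩ := shrink (r^2 + β^2) (by positivity) (half_pos hε)
        set T2 := Sq e μ μ⁻¹ with hT2
        refine ⟨Sq u l l⁻¹ * T2,
          symp_mul (sq_symp hu (mul_inv_cancel₀ (ne_of_gt hl0)))
            (sq_symp he (mul_inv_cancel₀ (ne_of_gt hμ0))), ?_⟩
        have hT2a : T2 *ᵥ a = a := by
          apply sq_fix
          · rw [ha_u, dotProduct_smul, heu, smul_zero]
          · rw [Omega_dot, hΩa, dotProduct_smul, heb, smul_zero, neg_zero]
        have hT2u : T2 *ᵥ u = u := by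
          apply sq_fix
          · exact heu
          · exact hΩe_u
        have hT2p : T2 *ᵥ p = μ • p := by
          rw [hp_e, mulVec_smul, sq_self he, smul_smul, mul_comm s μ, ← smul_smul]
        have hT2b : T2 *ᵥ b = β • u + μ • p := by
          rw [hβb, mulVec_add, mulVec_smul, hT2u, hT2p]
        have hSqp : Sq u l l⁻¹ *ᵥ p = p := sq_fix _ _ hup (by rw [← hw_def]; exact hwp)
        have hTa : (Sq u l l⁻¹ * T2) *ᵥ a = (r * l) • u := by
          rw [← mulVec_mulVec, hT2a, ha_u, mulVec_smul, sq_self hu, smul_smul]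
        have hTb : (Sq u l l⁻¹ * T2) *ᵥ b = (β * l) • u + μ • p := by
          rw [← mulVec_mulVec, hT2b, mulVec_add, mulVec_smul, mulVec_smul, sq_self hu,
            hSqp, smul_smul]
        rw [hTa, hTb, habs, hγ0, abs_zero, mul_zero, mul_zero, zero_add]
        have c1 : ((r*l) • u) ⬝ᵥ ((r*l) • u) = (r*l)^2 := by
          rw [smul_dotProduct, dotProduct_smul, hu, smul_eq_mul, smul_eq_mul]; ring
        have c2 : ((β*l) • u + μ • p) ⬝ᵥ ((β*l) • u + μ • p)
            = (β*l)^2 + μ^2 * (p ⬝ᵥ p) := by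
          have := cost (β*l) 0 μ
          simpa using this
        rw [c1, c2]
        calc (r*l)^2 + ((β*l)^2 + μ^2 * (p ⬝ᵥ p))
            = l^2 * (r^2 + β^2) + μ^2 * (p ⬝ᵥ p) := by ring
        _ ≤ ε/2 + ε/2 := add_le_add hlC hμC
        _ = ε := add_halves ε
    · -- γ ≠ 0 : first a transvection kills the u-component of b
      set T1 := Tv u (-β/γ) with hT1
      have hT1a : T1 *ᵥ a = a := by
        apply tv_fix
        rw [ha_u, dotProduct_smul, ← hw_def, hwu, smul_zero]
      have hT1b : T1 *ᵥ b = γ • w + p := by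
        rw [hT1, tv_mulVec, ← hw_def, ← hγ, div_mul_cancel₀ _ hγ0, hb_dec]
        module
      set l := Real.sqrt (|γ| / r) with hl
      have hγpos : 0 < |γ| := abs_pos.mpr hγ0
      have hl0 : 0 < l := Real.sqrt_pos.mpr (by positivity)
      have hl2 : l^2 = |γ| / r := Real.sq_sqrt (by positivity)
      have hrl : (r * l)^2 = r * |γ| := by
        rw [mul_pow, hl2]; field_simp
      have hgl : (γ * l⁻¹)^2 = r * |γ| := by
        rw [mul_pow, inv_pow, hl2, inv_div, ← sq_abs γ]
        field_simp [ne_of_gt hr0, ne_of_gt hγpos]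
      have hSw : Sq u l l⁻¹ *ᵥ w = l⁻¹ • w := by rw [hw_def]; exact sq_omega hu l l⁻¹
      by_cases hp0 : p = 0
      · refine ⟨Sq u l l⁻¹ * T1,
          symp_mul (sq_symp hu (mul_inv_cancel₀ (ne_of_gt hl0))) (tv_symp u (-β/γ)), ?_⟩
        have hTa : (Sq u l l⁻¹ * T1) *ᵥ a = (r * l) • u := by
          rw [← mulVec_mulVec, hT1a, ha_u, mulVec_smul, sq_self hu, smul_smul]
        have hTb : (Sq u l l⁻¹ * T1) *ᵥ b = (γ * l⁻¹) • w := by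
          rw [← mulVec_mulVec, hT1b, hp0, add_zero, mulVec_smul, hSw, smul_smul]
        have c1 : ((r*l) • u) ⬝ᵥ ((r*l) • u) = (r*l)^2 := by
          rw [smul_dotProduct, dotProduct_smul, hu, smul_eq_mul, smul_eq_mul]; ring
        have c2 : ((γ*l⁻¹) • w) ⬝ᵥ ((γ*l⁻¹) • w) = (γ*l⁻¹)^2 := by
          rw [smul_dotProduct, dotProduct_smul, hww, smul_eq_mul, smul_eq_mul]; ring
        rw [hTa, hTb, c1, c2, hrl, hgl, habs]
        linarith
      · have hpp : 0 < p ⬝ᵥ p := dot_self_pos hp0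
        set s := Real.sqrt (p ⬝ᵥ p) with hs
        have hs0 : 0 < s := Real.sqrt_pos.mpr hpp
        have hs2 : s^2 = p ⬝ᵥ p := Real.sq_sqrt (le_of_lt hpp)
        obtain ⟨e, he_def⟩ : ∃ x : Fin (2*n) → ℝ, x = s⁻¹ • p := ⟨_, rfl⟩
        have he : e ⬝ᵥ e = 1 := by
          rw [he_def, smul_dotProduct, dotProduct_smul, smul_eq_mul, smul_eq_mul, ← hs2]
          field_simp
        have hp_e : p = s • e := by
          rw [he_def, smul_smul, mul_inv_cancel₀ (ne_of_gt hs0), one_smul]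
        have heu : e ⬝ᵥ u = 0 := by rw [he_def, smul_dotProduct, hpu, smul_zero]
        have heb : e ⬝ᵥ w = 0 := by rw [he_def, smul_dotProduct, hpw, smul_zero]
        have hΩe_u : (Omega n *ᵥ e) ⬝ᵥ u = 0 := by
          rw [Omega_dot, ← hw_def, he_def, smul_dotProduct, hpw, smul_zero, neg_zero]
        obtain ⟨μ, hμ0, hμC⟩ := shrink (p ⬝ᵥ p) (dot_self_nonneg p) hε
        set T2 := Sq e μ μ⁻¹ with hT2
        refine ⟨Sq u l l⁻¹ * (T2 * T1),
          symp_mul (sq_symp hu (mul_inv_cancel₀ (ne_of_gt hl0)))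
            (symp_mul (sq_symp he (mul_inv_cancel₀ (ne_of_gt hμ0)))
              (tv_symp u (-β/γ))), ?_⟩
        have hT2a : T2 *ᵥ a = a := by
          apply sq_fix
          · rw [ha_u, dotProduct_smul, heu, smul_zero]
          · rw [Omega_dot, hΩa, dotProduct_smul, heb, smul_zero, neg_zero]
        have hT2w : T2 *ᵥ w = w := by
          apply sq_fix
          · exact heb
          · rw [Omega_dot, hΩw, dotProduct_neg, heu]; norm_num
        have hT2p : T2 *ᵥ p = μ • p := by
          rw [hp_e, mulVec_smul, sq_self he, smul_smul, mul_comm s μ, ← smul_smul]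
        have hSqp : Sq u l l⁻¹ *ᵥ p = p := sq_fix _ _ hup (by rw [← hw_def]; exact hwp)
        have hTa : (Sq u l l⁻¹ * (T2 * T1)) *ᵥ a = (r * l) • u := by
          rw [← mulVec_mulVec, ← mulVec_mulVec, hT1a, hT2a, ha_u, mulVec_smul,
            sq_self hu, smul_smul]
        have hTb : (Sq u l l⁻¹ * (T2 * T1)) *ᵥ b = (γ * l⁻¹) • w + μ • p := by
          rw [← mulVec_mulVec, ← mulVec_mulVec, hT1b, mulVec_add, mulVec_smul, hT2w,
            hT2p, mulVec_add, mulVec_smul, hSw, mulVec_smul, hSqp, smul_smul]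
        have c1 : ((r*l) • u) ⬝ᵥ ((r*l) • u) = (r*l)^2 := by
          rw [smul_dotProduct, dotProduct_smul, hu, smul_eq_mul, smul_eq_mul]; ring
        have c2 : ((γ*l⁻¹) • w + μ • p) ⬝ᵥ ((γ*l⁻¹) • w + μ • p)
            = (γ*l⁻¹)^2 + μ^2 * (p ⬝ᵥ p) := by
          have := cost 0 (γ*l⁻¹) μ
          simpa using this
        rw [hTa, hTb, c1, c2, hrl, hgl, habs]
        linarith
end W5

section W6
open PfAux
variable {n : ℕ}

/-- coercion of a real vector to a complex vector -/
def rC (x : Fin (2*n) → ℝ) : Fin (2*n) → ℂ := fun i => (x i : ℂ)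

lemma cC_mul (M N : Matrix (Fin (2*n)) (Fin (2*n)) ℝ) : cC (M * N) = cC M * cC N := by
  ext i j
  simp [cC, mul_apply]

lemma cC_smul (r : ℝ) (M : Matrix (Fin (2*n)) (Fin (2*n)) ℝ) :
    cC (r • M) = (r : ℂ) • cC M := by
  ext i j; simp [cC]

lemma cC_conjTranspose (M : Matrix (Fin (2*n)) (Fin (2*n)) ℝ) : (cC M)ᴴ = cC Mᵀ := by
  ext i j; simp [cC, conjTranspose_apply]

lemma cC_mulVec_rC (M : Matrix (Fin (2*n)) (Fin (2*n)) ℝ) (x : Fin (2*n) → ℝ) :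
    cC M *ᵥ rC x = rC (M *ᵥ x) := by
  funext i
  simp [cC, rC, mulVec, dotProduct]

lemma rC_dot (x y : Fin (2*n) → ℝ) : rC x ⬝ᵥ rC y = ((x ⬝ᵥ y : ℝ) : ℂ) := by
  simp [rC, dotProduct]

lemma star_rC (x : Fin (2*n) → ℝ) : star (rC x) = rC x := by
  funext i; simp [rC]

lemma star_comb (x y : Fin (2*n) → ℝ) :
    star (rC x + Complex.I • rC y) = rC x - Complex.I • rC y := by
  rw [star_add, star_smul, star_rC, star_rC, Complex.star_def, Complex.conj_I]
  module

lemma quad_real (M : Matrix (Fin (2*n)) (Fin (2*n)) ℝ) (x y : Fin (2*n) → ℝ) :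
    (rC x - Complex.I • rC y) ⬝ᵥ (cC M *ᵥ (rC x + Complex.I • rC y))
      = ((x ⬝ᵥ (M *ᵥ x) + y ⬝ᵥ (M *ᵥ y) : ℝ) : ℂ)
        + Complex.I * ((x ⬝ᵥ (M *ᵥ y) - y ⬝ᵥ (M *ᵥ x) : ℝ) : ℂ) := by
  simp only [mulVec_add, mulVec_smul, cC_mulVec_rC, sub_dotProduct, smul_dotProduct,
    dotProduct_add, dotProduct_smul, rC_dot, smul_eq_mul]
  push_cast
  linear_combination (-(y ⬝ᵥ (M *ᵥ y) : ℝ) : ℂ) * Complex.I_sq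

lemma symm_dot_comm {M : Matrix (Fin (2*n)) (Fin (2*n)) ℝ} (hM : M.IsSymm)
    (x y : Fin (2*n) → ℝ) : x ⬝ᵥ (M *ᵥ y) = y ⬝ᵥ (M *ᵥ x) := by
  rw [dotProduct_mulVec, show x ᵥ* M = Mᵀ *ᵥ x from by
    conv_lhs => rw [← transpose_transpose M]
    rw [vecMul_transpose], hM, dotProduct_comm (M *ᵥ x) y]

lemma skew_dot_comm (x y : Fin (2*n) → ℝ) :
    y ⬝ᵥ (Omega n *ᵥ x) = -(x ⬝ᵥ (Omega n *ᵥ y)) := by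
  rw [dotProduct_comm, Omega_dot]

/-- quadratic form of a symmetric real matrix on `rC x + I rC y` -/
lemma quad_symm {M : Matrix (Fin (2*n)) (Fin (2*n)) ℝ} (hM : M.IsSymm)
    (x y : Fin (2*n) → ℝ) :
    (rC x - Complex.I • rC y) ⬝ᵥ (cC M *ᵥ (rC x + Complex.I • rC y))
      = ((x ⬝ᵥ (M *ᵥ x) + y ⬝ᵥ (M *ᵥ y) : ℝ) : ℂ) := by
  rw [quad_real, symm_dot_comm hM x y, sub_self, Complex.ofReal_zero, mul_zero, add_zero]

/-- quadratic form of `Omega` on `rC x + I rC y` -/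
lemma quad_Omega (x y : Fin (2*n) → ℝ) :
    (rC x - Complex.I • rC y) ⬝ᵥ (cC (Omega n) *ᵥ (rC x + Complex.I • rC y))
      = Complex.I * ((2 * (x ⬝ᵥ (Omega n *ᵥ y)) : ℝ) : ℂ) := by
  rw [quad_real, skew_dot (n := n) x, skew_dot (n := n) y, skew_dot_comm x y]
  push_cast
  ring

lemma herm_cC {M : Matrix (Fin (2*n)) (Fin (2*n)) ℝ} (hM : M.IsSymm) :
    (cC M).IsHermitian := by
  unfold IsHermitian
  rw [cC_conjTranspose, hM]

lemma herm_K : ((Complex.I / 2) • cC (Omega n)).IsHermitian := by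
  unfold IsHermitian
  rw [conjTranspose_smul, cC_conjTranspose, Omega_transpose, show cC (-(Omega n))
    = -cC (Omega n) from by ext i j; simp [cC]]
  rw [show star (Complex.I / 2) = -(Complex.I / 2) from by
    simp [Complex.star_def, div_eq_mul_inv]]
  module

lemma symm_conj (X M : Matrix (Fin (2*n)) (Fin (2*n)) ℝ) (hM : M.IsSymm) :
    (X * M * Xᵀ).IsSymm := by
  unfold Matrix.IsSymm
  rw [transpose_mul, transpose_mul, transpose_transpose, hM, Matrix.mul_assoc]

lemma dot_conjX (X M : Matrix (Fin (2*n)) (Fin (2*n)) ℝ) (x : Fin (2*n) → ℝ) :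
    x ⬝ᵥ ((X * M * Xᵀ) *ᵥ x) = (Xᵀ *ᵥ x) ⬝ᵥ (M *ᵥ (Xᵀ *ᵥ x)) := by
  rw [← mulVec_mulVec, ← mulVec_mulVec, dotProduct_mulVec x X, ← transpose_transpose X,
    vecMul_transpose, transpose_transpose]

end W6

section W7
open PfAux
variable {n : ℕ}

lemma vecMul_eq (x : Fin (2*n) → ℝ) (S : Matrix (Fin (2*n)) (Fin (2*n)) ℝ) :
    x ᵥ* S = Sᵀ *ᵥ x := by
  conv_lhs => rw [← transpose_transpose S]
  rw [vecMul_transpose]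

lemma gram (S : Matrix (Fin (2*n)) (Fin (2*n)) ℝ) (x : Fin (2*n) → ℝ) :
    x ⬝ᵥ ((S * Sᵀ) *ᵥ x) = (Sᵀ *ᵥ x) ⬝ᵥ (Sᵀ *ᵥ x) := by
  rw [← mulVec_mulVec, dotProduct_mulVec, vecMul_eq]

lemma sigma_form {σ : Matrix (Fin (2*n)) (Fin (2*n)) ℝ} (hσ : σ.IsSymm)
    (x y : Fin (2*n) → ℝ) :
    star (rC x + Complex.I • rC y) ⬝ᵥ
      ((cC σ - (Complex.I/2) • cC (Omega n)) *ᵥ (rC x + Complex.I • rC y))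
    = ((x ⬝ᵥ (σ *ᵥ x) + y ⬝ᵥ (σ *ᵥ y) + x ⬝ᵥ (Omega n *ᵥ y) : ℝ) : ℂ) := by
  rw [star_comb]
  simp only [sub_mulVec, smul_mulVec, dotProduct_sub, dotProduct_smul]
  rw [quad_symm hσ, quad_Omega]
  push_cast
  simp only [smul_eq_mul]
  linear_combination (-(x ⬝ᵥ (Omega n *ᵥ y) : ℝ) : ℂ) * Complex.I_sq

lemma S_form {P Y : Matrix (Fin (2*n)) (Fin (2*n)) ℝ} (X : Matrix (Fin (2*n)) (Fin (2*n)) ℝ)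
    (hP : (X * P * Xᵀ).IsSymm) (hY : Y.IsSymm) (x y : Fin (2*n) → ℝ) :
    star (rC x + Complex.I • rC y) ⬝ᵥ
      (((1/2 : ℂ) • cC (X * P * Xᵀ) + cC Y - (Complex.I/2) • cC (Omega n)) *ᵥ
        (rC x + Complex.I • rC y))
    = ((1/2 * ((Xᵀ *ᵥ x) ⬝ᵥ (P *ᵥ (Xᵀ *ᵥ x)) + (Xᵀ *ᵥ y) ⬝ᵥ (P *ᵥ (Xᵀ *ᵥ y)))
        + (x ⬝ᵥ (Y *ᵥ x) + y ⬝ᵥ (Y *ᵥ y) + x ⬝ᵥ (Omega n *ᵥ y)) : ℝ) : ℂ) := by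
  rw [star_comb]
  simp only [sub_mulVec, add_mulVec, smul_mulVec, dotProduct_sub, dotProduct_add,
    dotProduct_smul]
  rw [quad_symm hP, quad_symm hY, quad_Omega, dot_conjX, dot_conjX]
  push_cast
  simp only [smul_eq_mul]
  linear_combination (-(x ⬝ᵥ (Omega n *ᵥ y) : ℝ) : ℂ) * Complex.I_sq

lemma X_form {σ Y : Matrix (Fin (2*n)) (Fin (2*n)) ℝ} (X : Matrix (Fin (2*n)) (Fin (2*n)) ℝ)
    (hσ : (X * σ * Xᵀ).IsSymm) (hY : Y.IsSymm) (x y : Fin (2*n) → ℝ) :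
    star (rC x + Complex.I • rC y) ⬝ᵥ
      ((cC (X * σ * Xᵀ) + cC Y - (Complex.I/2) • cC (Omega n)) *ᵥ
        (rC x + Complex.I • rC y))
    = ((((Xᵀ *ᵥ x) ⬝ᵥ (σ *ᵥ (Xᵀ *ᵥ x)) + (Xᵀ *ᵥ y) ⬝ᵥ (σ *ᵥ (Xᵀ *ᵥ y)))
        + (x ⬝ᵥ (Y *ᵥ x) + y ⬝ᵥ (Y *ᵥ y) + x ⬝ᵥ (Omega n *ᵥ y)) : ℝ) : ℂ) := by
  rw [star_comb]
  simp only [sub_mulVec, add_mulVec, smul_mulVec, dotProduct_sub, dotProduct_add,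
    dotProduct_smul]
  rw [quad_symm hσ, quad_symm hY, quad_Omega, dot_conjX, dot_conjX]
  push_cast
  simp only [smul_eq_mul]
  linear_combination (-(x ⬝ᵥ (Omega n *ᵥ y) : ℝ) : ℂ) * Complex.I_sq

end W7

open PfAux

/-- A Gaussian map `(X, Y)` with `Y` symmetric is positive on Gaussian inputs
(i.e. `XσXᵀ + Y - (i/2)Ω_n ≥ 0` for every covariance matrix `σ ≥ (i/2)Ω_n`) if and
only if `(1/2) X S Sᵀ Xᵀ + Y - (i/2)Ω_n ≥ 0` for every symplectic `S`. -/
theorem positive_iff_positive_on_pure (n : ℕ) (hn : 1 ≤ n)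
    (X Y : Matrix (Fin (2*n)) (Fin (2*n)) ℝ) (hY : Y.IsSymm) :
    (∀ S : Matrix (Fin (2*n)) (Fin (2*n)) ℝ, S * Omega n * Sᵀ = Omega n →
      ((1/2 : ℂ) • cC (X * (S * Sᵀ) * Xᵀ) + cC Y
        - (Complex.I / 2) • cC (Omega n)).PosSemidef)
    ↔
    (∀ σ : Matrix (Fin (2*n)) (Fin (2*n)) ℝ, σ.IsSymm →
      (cC σ - (Complex.I / 2) • cC (Omega n)).PosSemidef →
      (cC (X * σ * Xᵀ) + cC Y - (Complex.I / 2) • cC (Omega n)).PosSemidef) := by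

  constructor
  · -- hard direction
    intro h σ hσsym hσpsd
    have hXσ : (X * σ * Xᵀ).IsSymm := symm_conj X σ hσsym
    refine PosSemidef.of_dotProduct_mulVec_nonneg (((herm_cC hXσ).add (herm_cC hY)).sub herm_K) ?_
    intro v
    obtain ⟨p, hp⟩ : ∃ x, x = fun i => (v i).re := ⟨_, rfl⟩
    obtain ⟨q, hq⟩ : ∃ x, x = fun i => (v i).im := ⟨_, rfl⟩
    have hv : v = rC p + Complex.I • rC q := by
      funext i
      rw [hp, hq]
      show v i = ((v i).re : ℂ) + Complex.I * ((v i).im : ℂ)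
      rw [mul_comm, Complex.re_add_im]
    obtain ⟨a, ha⟩ : ∃ x, x = Xᵀ *ᵥ p := ⟨_, rfl⟩
    obtain ⟨b, hb⟩ : ∃ x, x = Xᵀ *ᵥ q := ⟨_, rfl⟩
    -- bound from the positivity of σ - (i/2)Ω
    have hbound : |a ⬝ᵥ (Omega n *ᵥ b)| ≤ a ⬝ᵥ (σ *ᵥ a) + b ⬝ᵥ (σ *ᵥ b) := by
      have h1 : (0:ℝ) ≤ a ⬝ᵥ (σ *ᵥ a) + b ⬝ᵥ (σ *ᵥ b) + a ⬝ᵥ (Omega n *ᵥ b) := by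
        have h0 := hσpsd.dotProduct_mulVec_nonneg (rC a + Complex.I • rC b)
        rw [sigma_form hσsym a b] at h0
        exact Complex.zero_le_real.mp h0
      have h2 : (0:ℝ) ≤ a ⬝ᵥ (σ *ᵥ a) + b ⬝ᵥ (σ *ᵥ b) - a ⬝ᵥ (Omega n *ᵥ b) := by
        have h0 := hσpsd.dotProduct_mulVec_nonneg (rC a + Complex.I • rC (-b))
        rw [sigma_form hσsym a (-b)] at h0
        have h3 := Complex.zero_le_real.mp h0
        simp only [mulVec_neg, dotProduct_neg, neg_dotProduct, neg_neg] at h3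
        linarith
      exact abs_le.mpr ⟨by linarith, by linarith⟩
    -- bound from positivity on pure Gaussian states
    have hQ : -(p ⬝ᵥ (Y *ᵥ p) + q ⬝ᵥ (Y *ᵥ q) + p ⬝ᵥ (Omega n *ᵥ q))
        ≤ |a ⬝ᵥ (Omega n *ᵥ b)| := by
      apply le_of_forall_pos_le_add
      intro ε hε
      obtain ⟨T, hT, hcost⟩ := key_inf a b hε
      have hPs : (Tᵀ * Tᵀᵀ).IsSymm := by
        unfold Matrix.IsSymm; rw [transpose_mul, transpose_transpose]
      have hPs' : (X * (Tᵀ * Tᵀᵀ) * Xᵀ).IsSymm := symm_conj X _ hPs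
      have h4 := (h Tᵀ (symp_transpose hT)).dotProduct_mulVec_nonneg (rC p + Complex.I • rC q)
      rw [S_form X hPs' hY p q] at h4
      have h5 := Complex.zero_le_real.mp h4
      rw [← ha, ← hb] at h5
      have hga : a ⬝ᵥ ((Tᵀ * Tᵀᵀ) *ᵥ a) = (T *ᵥ a) ⬝ᵥ (T *ᵥ a) := by
        have := gram Tᵀ a; rwa [transpose_transpose] at this
      have hgb : b ⬝ᵥ ((Tᵀ * Tᵀᵀ) *ᵥ b) = (T *ᵥ b) ⬝ᵥ (T *ᵥ b) := by
        have := gram Tᵀ b; rwa [transpose_transpose] at this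
      rw [hga, hgb] at h5
      linarith
    rw [hv, X_form X hXσ hY p q, ← ha, ← hb]
    exact Complex.zero_le_real.mpr (by linarith)
  · -- easy direction
    intro h S hS
    have hP : (S * Sᵀ).IsSymm := by
      unfold Matrix.IsSymm; rw [transpose_mul, transpose_transpose]
    have hσsym : ((1/2 : ℝ) • (S * Sᵀ)).IsSymm := by
      unfold Matrix.IsSymm at *
      rw [transpose_smul, hP]
    have hΩ2 : cC (Omega n) * cC (Omega n) = -1 := by
      rw [← cC_mul, Omega_mul_Omega]
      ext i j
      by_cases hij : i = j <;> simp [cC, hij]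
    have hGherm : ((1/2 : ℂ) • (1 : Matrix (Fin (2*n)) (Fin (2*n)) ℂ)
        - (Complex.I/2) • cC (Omega n)).IsHermitian := by
      unfold Matrix.IsHermitian
      rw [conjTranspose_sub, herm_K, conjTranspose_smul, conjTranspose_one]
      norm_num
    have hG : ((1/2 : ℂ) • (1 : Matrix (Fin (2*n)) (Fin (2*n)) ℂ)
        - (Complex.I/2) • cC (Omega n)).PosSemidef := by
      have h2 : ((1/2 : ℂ) • (1 : Matrix (Fin (2*n)) (Fin (2*n)) ℂ)
            - (Complex.I/2) • cC (Omega n))ᴴ *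
          ((1/2 : ℂ) • 1 - (Complex.I/2) • cC (Omega n))
          = ((1/2 : ℂ) • 1 - (Complex.I/2) • cC (Omega n)) := by
        rw [hGherm]
        simp only [sub_mul, mul_sub, smul_mul_assoc, mul_smul_comm, one_mul, mul_one,
          smul_smul, hΩ2]
        match_scalars <;>
          first
          | ring1
          | linear_combination Complex.I_sq
          | linear_combination (-(1:ℂ)/4) * Complex.I_sq
          | linear_combination ((1:ℂ)/4) * Complex.I_sq
      have h3 := posSemidef_conjTranspose_mul_self
        ((1/2 : ℂ) • (1 : Matrix (Fin (2*n)) (Fin (2*n)) ℂ) - (Complex.I/2) • cC (Omega n))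
      rwa [h2] at h3
    have hpsd : (cC ((1/2:ℝ) • (S * Sᵀ)) - (Complex.I / 2) • cC (Omega n)).PosSemidef := by
      have hm := hG.mul_mul_conjTranspose_same (cC S)
      have heq : cC S * ((1/2:ℂ) • 1 - (Complex.I/2) • cC (Omega n)) * (cC S)ᴴ
          = cC ((1/2:ℝ) • (S * Sᵀ)) - (Complex.I/2) • cC (Omega n) := by
        rw [cC_conjTranspose, cC_smul, cC_mul]
        have hSΩ : cC S * cC (Omega n) * cC Sᵀ = cC (Omega n) := by
          rw [← cC_mul, ← cC_mul, hS]
        rw [show ((1/2:ℝ) : ℂ) = (1/2 : ℂ) by push_cast; ring]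
        simp only [mul_sub, sub_mul, smul_mul_assoc, mul_smul_comm, mul_one, one_mul]
        rw [hSΩ]
      rw [heq] at hm
      exact hm
    have hres := h ((1/2:ℝ) • (S * Sᵀ)) hσsym hpsd
    have heq2 : cC (X * ((1/2:ℝ) • (S * Sᵀ)) * Xᵀ) = (1/2:ℂ) • cC (X * (S * Sᵀ) * Xᵀ) := by
      rw [show X * ((1/2:ℝ) • (S * Sᵀ)) * Xᵀ = (1/2:ℝ) • (X * (S * Sᵀ) * Xᵀ) from by
        rw [mul_smul_comm, smul_mul_assoc], cC_smul]
      norm_num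
    rw [heq2] at hres
    exact hres
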